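/- The function Ω defined by Ω(x) = Σ_{k} (h(k+1) − h(k)) |x_{(k)}| (decreasing rearrangement of absolute values, with h concave non-decreasing and h(0)=0) is absolutely homogeneous: Ω(c·x) = |c|·Ω(x) for all scalars c, and satisfies the triangle inequality Ω(x + y) ≤ Ω(x) + Ω(y); hence Ω is a seminorm. -/

import Mathlib

open Finset

/-- The `(k+1)`-th largest absolute value among the entries of `x`. -/
noncomputable def sortedAbs {m : ℕ} (x : Fin m → ℝ) : Fin m → ℝ :=
  fun k => |x (Tuple.sort (fun i => -|x i|) k)|

/-- The submodular-relaxation regularizer `Ω(x) = ∑ k c k * |x_{(k)}|`. -/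
noncomputable def omegaReg {m : ℕ} (c : ℕ → ℝ) (x : Fin m → ℝ) : ℝ :=
  ∑ k : Fin m, c k * sortedAbs x k

/-!
The sorted absolute values are `|x ∘ τ|` for the sorting permutation `τ`. Since `c` is
non-increasing, the rearrangement inequality makes `∑ k, c k * |x (σ k)|` largest at `σ = τ`, so
`Ω x = max_σ ∑ k, c k * |x (σ k)|`. Scaling by `a` does not change the sorting order, which gives
homogeneity. For the triangle inequality, sort `x + y`, use `|x + y| ≤ |x| + |y|` termwise
(here `c ≥ 0`), and bound the two resulting sums by `Ω x` and `Ω y` through the maximum formula.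
-/

section SortedAbs

variable {m : ℕ}

theorem sortedAbs_antitone (x : Fin m → ℝ) : Antitone (sortedAbs x) := fun _ _ hij =>
  neg_le_neg_iff.mp (Tuple.monotone_sort (fun i => -|x i|) hij)

theorem sortedAbs_eq_of_antitone {x : Fin m → ℝ} {σ : Equiv.Perm (Fin m)}
    (hσ : Antitone fun k => |x (σ k)|) (k : Fin m) : sortedAbs x k = |x (σ k)| := by
  have hmono : Monotone ((fun i => -|x i|) ∘ σ) := fun _ _ hij => neg_le_neg (hσ hij)
  have h := congrFun (Tuple.comp_sort_eq_comp_iff_monotone.mpr hmono) k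
  simpa [sortedAbs] using h.symm

theorem sortedAbs_smul (a : ℝ) (x : Fin m → ℝ) (k : Fin m) :
    sortedAbs (a • x) k = |a| * sortedAbs x k := by
  have hsort : Antitone fun k => |(a • x) (Tuple.sort (fun i => -|x i|) k)| := by
    simpa only [Pi.smul_apply, smul_eq_mul, abs_mul, sortedAbs] using
      (sortedAbs_antitone x).const_mul (abs_nonneg a)
  rw [sortedAbs_eq_of_antitone hsort, Pi.smul_apply, smul_eq_mul, abs_mul, sortedAbs]

end SortedAbs

section OmegaReg

variable {m : ℕ} {c : ℕ → ℝ}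

theorem omegaReg_smul (a : ℝ) (x : Fin m → ℝ) : omegaReg c (a • x) = |a| * omegaReg c x := by
  simp only [omegaReg, sortedAbs_smul, mul_sum, mul_left_comm]

theorem sum_mul_abs_comp_perm_le_omegaReg (hc : Antitone c) (x : Fin m → ℝ)
    (σ : Equiv.Perm (Fin m)) : ∑ k : Fin m, c k * |x (σ k)| ≤ omegaReg c x := by
  set τ := Tuple.sort fun i => -|x i|
  have hvary : Monovary (fun k : Fin m => c k) (sortedAbs x) :=
    (hc.comp_monotone Fin.val_strictMono.monotone).monovary (sortedAbs_antitone x)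
  calc ∑ k : Fin m, c k * |x (σ k)|
        = ∑ k : Fin m, c k * sortedAbs x ((σ.trans τ.symm) k) := by simp [sortedAbs, τ]
    _ ≤ omegaReg c x := hvary.sum_mul_comp_perm_le_sum_mul

theorem omegaReg_add_le (hnonneg : ∀ k, 0 ≤ c k) (hc : Antitone c) (x y : Fin m → ℝ) :
    omegaReg c (x + y) ≤ omegaReg c x + omegaReg c y := by
  set τ := Tuple.sort fun i => -|(x + y) i|
  calc omegaReg c (x + y) = ∑ k : Fin m, c k * |(x + y) (τ k)| := rfl
    _ ≤ ∑ k : Fin m, (c k * |x (τ k)| + c k * |y (τ k)|) := by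
        gcongr with k
        rw [← mul_add]
        exact mul_le_mul_of_nonneg_left (abs_add_le _ _) (hnonneg k)
    _ = ∑ k : Fin m, c k * |x (τ k)| + ∑ k : Fin m, c k * |y (τ k)| := sum_add_distrib
    _ ≤ omegaReg c x + omegaReg c y :=
        add_le_add (sum_mul_abs_comp_perm_le_omegaReg hc x τ)
          (sum_mul_abs_comp_perm_le_omegaReg hc y τ)

end OmegaReg

/-- with coefficients `c k = h(k+1) − h k` non-negative and
non-increasing (from `h` non-decreasing concave, `h 0 = 0`), `Ω` is absolutely
homogeneous and subadditive, hence a seminorm. -/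
theorem omegaReg_seminorm (m : ℕ) (c : ℕ → ℝ)
    (hnonneg : ∀ k, 0 ≤ c k)
    (hanti : ∀ k, c (k + 1) ≤ c k) :
    (∀ (a : ℝ) (x : Fin m → ℝ), omegaReg c (a • x) = |a| * omegaReg c x) ∧
    (∀ x y : Fin m → ℝ, omegaReg c (x + y) ≤ omegaReg c x + omegaReg c y) :=
  ⟨omegaReg_smul, omegaReg_add_le hnonneg (antitone_nat_of_succ_le hanti)⟩
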